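/- arXiv:math/0107054 — 2 statements merged into one kernel-verified Lean document; each statement's English description precedes it below -/
import Mathlib

section
/- The family of characters χ^{(N)}_{k,l;b}(q,z), indexed by N = 0, 1, 2, ... and by admissible boundary vectors b, is the unique solution of the recursion equations χ^{(N+1)}_{k,l;(b_0,...,b_{l-2})}(q,z) = Σ_{i=0}^{b_0} z^i · χ^{(N)}_{k,l;(b_1−i, b_2−i, ..., b_{l-2}−i, k−i)}(q, qz) with the initial condition χ^{(0)}_{k,l;b}(q,z) = 1 for all b. -/
/-!
Splitting a configuration of length at most `N + 1` according to its first entry `x_0 = i`,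
the tail `(x_1, x_2, …)` is a configuration of length at most `N` for the boundary vector
`(b_1 - i, …, b_{l-2} - i, k - i)`, and moving every entry one place to the left lowers the
weight `Σ j x_j` by `Σ x_j`, which is the substitution `z ↦ qz`. This gives the recursion;
the shifted boundary vector is again admissible, so by induction on `N` the recursion and the
initial condition determine the whole family.
-/

open Finset Filter MvPowerSeries

noncomputable section

/-- Formal power series in two variables `q` (index 0) and `z` (index 1). -/
abbrev PS : Type := MvPowerSeries (Fin 2) ℂ

/-- The variable `q`. -/
def Qv : PS := MvPowerSeries.X 0
/-- The variable `z`. -/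
def Zv : PS := MvPowerSeries.X 1

/-- Build a power series from its coefficient function. -/
def ofCoeff (c : (Fin 2 →₀ ℕ) → ℂ) : PS := c

/-- The exponent `q^a z^c`. -/
def idx2 (a c : ℕ) : Fin 2 →₀ ℕ := Finsupp.single 0 a + Finsupp.single 1 c

/-- The q-shift operator `(S g)(q,z) = g(q,qz)`. -/
def Sop (f : PS) : PS :=
  ofCoeff fun e => if e 1 ≤ e 0 then MvPowerSeries.coeff (idx2 (e 0 - e 1) (e 1)) f else 0

/-- The window condition for `(k,l)`-configurations: `x_j + ... + x_{j+l-1} ≤ k`. -/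
def windowOK (k l : ℕ) (x : ℕ → ℕ) : Prop := ∀ j, ∑ t ∈ Finset.range l, x (j + t) ≤ k

/-- The boundary condition: `x_0 + ... + x_i ≤ b_i` for `0 ≤ i ≤ l-2`. -/
def boundOK (l : ℕ) (b : ℕ → ℕ) (x : ℕ → ℕ) : Prop :=
  ∀ i, i < l - 1 → ∑ t ∈ Finset.range (i + 1), x t ≤ b i

/-- Admissible boundary vectors: `b_0 ≤ b_1 ≤ ... ≤ b_{l-2} ≤ k`. -/
def AdmB (k l : ℕ) (b : ℕ → ℕ) : Prop :=
  (∀ i j, i ≤ j → j < l - 1 → b i ≤ b j) ∧ ∀ i, i < l - 1 → b i ≤ k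

/-- The character `χ^{(N)}_{k,l;b}(q,z)`: the coefficient of `q^a z^m` counts
`(k,l)`-configurations of length at most `N` obeying the boundary conditions,
with `Σ j·x_j = a` and `Σ x_j = m`. -/
def chiN (k l N : ℕ) (b : ℕ → ℕ) : PS :=
  ofCoeff fun e => (Nat.card {x : ℕ → ℕ //
    windowOK k l x ∧ boundOK l b x ∧ (∀ i, N ≤ i → x i = 0) ∧
    ∑ j ∈ Finset.range N, j * x j = e 0 ∧ ∑ j ∈ Finset.range N, x j = e 1} : ℂ)

/-- The limit character `χ^{(∞)}_{k,l;b}(q,z)`. -/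
def chiInf (k l : ℕ) (b : ℕ → ℕ) : PS :=
  ofCoeff fun e => (Nat.card {x : ℕ → ℕ //
    windowOK k l x ∧ boundOK l b x ∧ (∀ i, e 0 + 1 ≤ i → x i = 0) ∧
    ∑ j ∈ Finset.range (e 0 + 1), j * x j = e 0 ∧
    ∑ j ∈ Finset.range (e 0 + 1), x j = e 1} : ℂ)

/-- The shifted boundary vector `(b_1 - i, ..., b_{l-2} - i, k - i)`. -/
def shiftB (k l : ℕ) (b : ℕ → ℕ) (i : ℕ) : ℕ → ℕ :=
  fun j => if j + 1 ≤ l - 2 then b (j + 1) - i else k - i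

/-- The monomial `q^{p.1} z^{p.2}`. -/
def monoPS (p : ℕ × ℕ) : PS := Qv ^ p.1 * Zv ^ p.2

/-- Exponents in the bracket `[P_1,...,P_l] = P_1^{b_0} P_2^{b_1-b_0} ⋯ P_l^{k-b_{l-2}}`. -/
def bexp (l k : ℕ) (b : ℕ → ℕ) (i : ℕ) : ℕ :=
  if i = 0 then b 0 else if i = l - 1 then k - b (l - 2) else b i - b (i - 1)

/-- The bracket `[P_1,...,P_l]` as a function of the boundary vector `b`. -/
def bracket (l k : ℕ) (P : ℕ → ℕ × ℕ) (b : ℕ → ℕ) : PS :=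
  ∏ i ∈ Finset.range l, monoPS (P i) ^ bexp l k b i

/-- q-exponent pattern of the tuples in the list defining `V_l`
(`r` of the entries carry a factor `z`; `c 0 = 0`). -/
def patQ (l r : ℕ) (c : ℕ → ℕ) (j : ℕ) : ℕ := if j < r then c (l - r + j) else c (j - r)

/-- z-exponent pattern of the tuples in the list defining `V_l`. -/
def patZ (r j : ℕ) : ℕ := if j < r then 1 else 0

/-- The tuples `(P_1,...,P_l)` appearing in the definition of `V_l`, namely
`q^{mk} z^{nk}[q^{c_{l-r}}z, …, q^{c_{l-1}}z, 1, q^{c_1}, …, q^{c_{l-1-r}}]`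
with the common factor `q^m z^n` distributed over the entries. -/
def SimpleTuple (l : ℕ) (P : ℕ → ℕ × ℕ) : Prop :=
  ∃ m n r : ℕ, r < l ∧ ∃ c : ℕ → ℕ, c 0 = 0 ∧ Monotone c ∧
    ∀ j, j < l → P j = (m + patQ l r c j, n + patZ r j)

/-- Admissible boundary data. -/
def Adm (k l : ℕ) : Type := {b : ℕ → ℕ // AdmB k l b}

/-- The ambient space of functions of `b` with values in power series; `V_l` is a
subspace of it. -/
abbrev VV (k l : ℕ) : Type := Adm k l → PS

/-- The simple vector `f(q,z)·[P_1,...,P_l]`. -/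
def simpleVal (k l : ℕ) (f : PS) (P : ℕ → ℕ × ℕ) : VV k l := fun b => f * bracket l k P b.val

/-- The space `V_l`, spanned by simple vectors. -/
def Vspan (k l : ℕ) : Submodule ℂ (VV k l) :=
  Submodule.span ℂ {v | ∃ f P, SimpleTuple l P ∧ v = simpleVal k l f P}

/-- Power series expansion of `1/(1 - q^{w.1} z^{w.2})` where `w` may have negative
exponents, in which case `1/(1-u) = -Σ_{n≥1} u^{-n}` is used. -/
def geomPS : ℤ × ℤ → PS := fun w =>
  if 0 ≤ w.1 ∧ 0 ≤ w.2 then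
    ofCoeff fun e => ({n : ℕ | (n : ℤ) * w.1 = (e 0 : ℤ) ∧ (n : ℤ) * w.2 = (e 1 : ℤ)}.ncard : ℂ)
  else
    ofCoeff fun e =>
      -({n : ℕ | 0 < n ∧ (n : ℤ) * w.1 = -(e 0 : ℤ) ∧ (n : ℤ) * w.2 = -(e 1 : ℤ)}.ncard : ℂ)

/-- Exponents of `S(q^{-1} z P_l / P_1)`. -/
def wExpA (l : ℕ) (P : ℕ → ℕ × ℕ) : ℤ × ℤ :=
  (((P (l-1)).1 : ℤ) + ((P (l-1)).2 : ℤ) - ((P 0).1 : ℤ) - ((P 0).2 : ℤ),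
   ((P (l-1)).2 : ℤ) + 1 - ((P 0).2 : ℤ))

/-- The q-shift of a monomial: `S(q^e z^d) = q^{e+d} z^d`. -/
def Smono (p : ℕ × ℕ) : ℕ × ℕ := (p.1 + p.2, p.2)

/-- The tuple `(S P_1, S P_1, S P_2, ..., S P_{l-1})` produced by the operator `A`. -/
def tupA (P : ℕ → ℕ × ℕ) : ℕ → ℕ × ℕ := fun j => if j = 0 then Smono (P 0) else Smono (P (j - 1))

/-- The tuple `(S(q^{-1} z P_l), S P_1, ..., S P_{l-1})` produced by the operator `B`. -/
def tupB (l : ℕ) (P : ℕ → ℕ × ℕ) : ℕ → ℕ × ℕ :=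
  fun j => if j = 0 then ((P (l-1)).1 + (P (l-1)).2, (P (l-1)).2 + 1) else Smono (P (j - 1))

/-- Defining property of the operator `A`:
`A(f[P_1,…,P_l]) = S(f/(1 - q^{-1}zP_l/P_1)·[P_1,P_1,P_2,…,P_{l-1}])`. -/
def HypA (k l : ℕ) (A : Module.End ℂ (VV k l)) : Prop :=
  ∀ f P, SimpleTuple l P →
    A (simpleVal k l f P) = simpleVal k l (Sop f * geomPS (wExpA l P)) (tupA P)

/-- Defining property of the operator `B`:
`B(f[P_1,…,P_l]) = S(f/(1 - q z^{-1}P_1/P_l)·[q^{-1}zP_l,P_1,…,P_{l-1}])`. -/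
def HypB (k l : ℕ) (B : Module.End ℂ (VV k l)) : Prop :=
  ∀ f P, SimpleTuple l P →
    B (simpleVal k l f P) =
      simpleVal k l (Sop f * geomPS (-(wExpA l P).1, -(wExpA l P).2)) (tupB l P)

/-- The vector `v_ini = [1,...,1]`. -/
def vini (k l : ℕ) : VV k l := simpleVal k l 1 (fun _ => (0, 0))

/-- `(z)_n = Π_{i=0}^{n-1} (1 - q^i z)`. -/
def pochZ (n : ℕ) : PS := ∏ i ∈ Finset.range n, (1 - Qv ^ i * Zv)
/-- `(q)_t = Π_{i=1}^{t} (1 - q^i)`. -/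
def pochQ (t : ℕ) : PS := ∏ i ∈ Finset.range t, (1 - Qv ^ (i + 1))
/-- `(q^t z)_∞ = Π_{i≥0} (1 - q^{t+i} z)`, defined coefficientwise. -/
def pochInfQZ (t : ℕ) : PS :=
  ofCoeff fun e =>
    MvPowerSeries.coeff e (∏ i ∈ Finset.range (e 0 + 1), (1 - Qv ^ (t + i) * Zv))
/-- `(z)_∞ = Π_{i≥0} (1 - q^i z)`. -/
def pochInfZ : PS := pochInfQZ 0

/-- The vector `v_∞ = [1,...,1]/(z)_∞`. -/
def vinf (k l : ℕ) : VV k l := simpleVal k l pochInfZ⁻¹ (fun _ => (0, 0))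

/-- Application of a monomial (word) in the operators `A` (letter `true`) and
`B` (letter `false`) to a vector; the leftmost letter acts last read, i.e.
`C_1 C_2 ⋯ C_m v = C_1 (C_2 (⋯ (C_m v)))`. -/
def wact (k l : ℕ) (A B : Module.End ℂ (VV k l)) (w : List Bool) (v : VV k l) : VV k l :=
  w.foldr (fun c u => if c then A u else B u) v

/-- A good monomial: `C_i = A` implies `C_{i+l-1} = A` (letters 0-indexed, `true = A`). -/
def GoodWord (l : ℕ) (w : List Bool) : Prop :=
  ∀ i, i + (l - 1) < w.length → w.getD i true = true → w.getD (i + (l - 1)) true = true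

/-- Canonical representative of an equivalence class of monomials: no trailing `A`s. -/
def Reduced (w : List Bool) : Prop := w = [] ∨ w.getLast? = some false

/-- Symbols for marked vertices: `•`, `∘`, `×`. -/
inductive MSym : Type
  | dot | circ | mark
  deriving DecidableEq

/-- The `A`-arrow on (possibly marked) vertices. -/
def stepA : List MSym → List MSym
  | MSym.circ :: J => J ++ [MSym.circ]
  | MSym.dot :: _ :: J => MSym.dot :: (J ++ [MSym.circ])
  | MSym.mark :: MSym.dot :: J => MSym.dot :: (J ++ [MSym.circ])
  | MSym.mark :: MSym.circ :: J => MSym.mark :: (J ++ [MSym.circ])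
  | MSym.mark :: MSym.mark :: J => MSym.dot :: (J ++ [MSym.circ])
  | v => v

/-- The `B`-arrow on (possibly marked) vertices: rotation. -/
def stepB : List MSym → List MSym
  | [] => []
  | x :: J => J ++ [x]

/-- The marked path of the monomial `w` (extended by `A`s at positions beyond its
length), starting from `[•,…,•,×]`; `mstate l w t` is the vertex after `t` arrows. -/
def mstate (l : ℕ) (w : List Bool) : ℕ → List MSym
  | 0 => List.replicate (l - 1) MSym.dot ++ [MSym.mark]
  | t + 1 => (if w.getD t true then stepA else stepB) (mstate l w t)

/-- The `t`-th vertex of the marked path has the form `[× • J]`, i.e. the `t`-th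
arrow is of type (i) or (ii). -/
def CSrc (l : ℕ) (w : List Bool) (t : ℕ) : Prop :=
  (mstate l w t).getD 0 MSym.circ = MSym.mark ∧ (mstate l w t).getD 1 MSym.circ = MSym.dot

/-- `(N A K, N B K)` is a cancellation pair: `N A K` is good and the displayed `A`
is its cancellation `A`-arrow (the last arrow of type (i) or (ii)). -/
def CancelPair (l : ℕ) (N K : List Bool) : Prop :=
  GoodWord l (N ++ true :: K) ∧ CSrc l (N ++ true :: K) N.length ∧
    ∀ t, N.length < t → ¬ CSrc l (N ++ true :: K) t

/-- `w` is good and has a cancellation `A`-arrow. -/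
def HasCA (l : ℕ) (w : List Bool) : Prop :=
  GoodWord l w ∧ ∃ t, w.getD t true = true ∧ CSrc l w t ∧ ∀ t', t < t' → ¬ CSrc l w t'

/-- `w` is good and has a cancellation `B`-arrow. -/
def HasCB (l : ℕ) (w : List Bool) : Prop :=
  GoodWord l w ∧ ∃ t, w.getD t true = false ∧ CSrc l w t ∧ ∀ t', t < t' → ¬ CSrc l w t'

/-- The index of the cancellation arrow. -/
def cancelIdx (l : ℕ) (w : List Bool) : ℕ :=
  sInf {t | CSrc l w t ∧ ∀ t', t < t' → ¬ CSrc l w t'}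

/-- Flip the letter at the cancellation arrow. -/
def flipCancel (l : ℕ) (w : List Bool) : List Bool :=
  (w ++ List.replicate (cancelIdx l w + 1 - w.length) true).set (cancelIdx l w) false

/-- The lattice `Λ` is `ℕ → ℤ` supported on `{0,…,l-1}`; coordinates `0,…,l-2`
are the generators `b_0,…,b_{l-2}` and coordinate `l-1` is the generator `k`.
`Ma` is the map `M_a`: `b_i ↦ b_{i+1}` (`i ≤ l-3`), `b_{l-2} ↦ k`, `k ↦ k`. -/
def Ma (l : ℕ) (v : ℕ → ℤ) : ℕ → ℤ := fun j =>
  if j = 0 then 0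
  else if j = l - 1 then v (l - 2) + v (l - 1)
  else if j < l - 1 then v (j - 1)
  else 0

/-- The map `M_b`: `b_i ↦ b_{i+1} - b_0` (`i ≤ l-3`), `b_{l-2} ↦ k - b_0`, `k ↦ k`. -/
def Mb (l : ℕ) (v : ℕ → ℤ) : ℕ → ℤ := fun j =>
  if j = 0 then -(∑ i ∈ Finset.range (l - 1), v i)
  else if j = l - 1 then v (l - 2) + v (l - 1)
  else if j < l - 1 then v (j - 1)
  else 0

/-- The representative `ī ∈ {1,…,l}` of `i` modulo `l`. -/
def ibar (l : ℕ) (i : ℤ) : ℕ := ((i - 1) % (l : ℤ)).toNat + 1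

/-- `ι_{i,j} = b_{ī-2} - b_{j̄-2} + k·δ(ī ≤ j̄)` (with `b_{-1} = 0`). -/
def iotaL (l : ℕ) (i j : ℤ) : ℕ → ℤ := fun t =>
  (if 2 ≤ ibar l i ∧ t = ibar l i - 2 then 1 else 0)
  - (if 2 ≤ ibar l j ∧ t = ibar l j - 2 then 1 else 0)
  + (if ibar l i ≤ ibar l j ∧ t = l - 1 then 1 else 0)

/-- `M_{c_1} ∘ ⋯ ∘ M_{c_m}` applied to `v`, where `c_i = a` if the `i`-th letter is
`A` (`true`) and `c_i = b` otherwise. -/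
def applyWord (l : ℕ) (w : List Bool) (v : ℕ → ℤ) : ℕ → ℤ :=
  w.foldr (fun c u => if c then Ma l u else Mb l u) v

/-- The extremal configuration of the monomial `w`:
`x_i = 0` if `C_{i+1} = A` and `x_i = M_{c_1} ∘ ⋯ ∘ M_{c_i}(b_0)` if `C_{i+1} = B`
(entries beyond the length of `w` are `0`, matching equivalence of configurations). -/
def xconf (l : ℕ) (w : List Bool) (i : ℕ) : ℕ → ℤ :=
  if w.getD i true = true then 0 else applyWord l (w.take i) (iotaL l 2 1)

/-- The `A`-arrow of the summation graph (vertices as arrays of `•` = `true`,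
`∘` = `false`). -/
def vstepA : List Bool → List Bool
  | false :: J => J ++ [false]
  | true :: _ :: J => true :: (J ++ [false])
  | v => v

/-- The `B`-arrow of the summation graph: rotation. -/
def vstepB : List Bool → List Bool
  | [] => []
  | x :: J => J ++ [x]

/-- The path associated with `w` in the summation graph, starting from
`I_top = [•,…,•]`; `vstate l w t` is the vertex `I^{(t)}`. -/
def vstate (l : ℕ) (w : List Bool) (t : ℕ) : List Bool :=
  (w.take t).foldl (fun v c => if c then vstepA v else vstepB v) (List.replicate l true)

/-- The evolution of the vector part of a simple vector under one operator. -/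
def tupStep (l : ℕ) (c : Bool) (P : ℕ → ℕ × ℕ) : ℕ → ℕ × ℕ :=
  if c then tupA P else tupB l P

/-- The vector part of `M v_∞` for a word `M`. -/
def wordTuple (l : ℕ) : List Bool → ℕ → ℕ × ℕ
  | [] => fun _ => (0, 0)
  | c :: w => tupStep l c (wordTuple l w)

/-- The scalar part of `M v_∞` for a word `M`. -/
def wordScalar (l : ℕ) : List Bool → PS
  | [] => pochInfZ⁻¹
  | c :: w =>
      Sop (wordScalar l w) *
        (if c then geomPS (wExpA l (wordTuple l w))
         else geomPS (-(wExpA l (wordTuple l w)).1, -(wExpA l (wordTuple l w)).2))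

/-- A cancellation block `𝔹_s = C_1 ⋯ C_{l+s}` with `C_1 = C_{s+2} = C_l = B`,
`C_2 = ⋯ = C_{s+1} = A`, `C_{l+1} = ⋯ = C_{l+s} = A` (0-indexed positions). -/
def IsBlock (l s : ℕ) (w : List Bool) : Prop :=
  s ≤ l - 2 ∧ w.length = l + s ∧
  w.getD 0 true = false ∧ w.getD (s + 1) true = false ∧ w.getD (l - 1) true = false ∧
  (∀ i, 1 ≤ i → i ≤ s → w.getD i true = true) ∧
  (∀ i, l ≤ i → i < l + s → w.getD i true = true)

/-- The block `𝔼_i = C_2 ⋯ C_l` where `C_j = B` iff `j ∈ {σ(1),…,σ(i)}`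
(1-based values of the permutation; `true = A`, `false = B`). -/
def Eblock (l : ℕ) (σ : Equiv.Perm (Fin l)) (i : ℕ) : List Bool :=
  (List.range (l - 1)).map fun t => decide (∀ a : Fin l, (a : ℕ) < i → (σ a : ℕ) ≠ t + 1)

/-- The word `𝔼_{l-2}^{n_{l-2}} ⋯ 𝔼_1^{n_1}`. -/
def coreWord (l : ℕ) (σ : Equiv.Perm (Fin l)) (n : ℕ → ℤ) : List Bool :=
  (((List.range (l - 2)).reverse.map fun i' =>
    (List.replicate (n (i' + 1)).toNat (Eblock l σ (i' + 1))).flatten)).flatten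

/-- The word `B^{n_{l-1}} 𝔼_{l-2}^{n_{l-2}} ⋯ 𝔼_1^{n_1}`; for `n_{l-1} < 0` the
first `-n_{l-1}` letters (which are `B`s) are removed instead. -/
def theWord (l : ℕ) (σ : Equiv.Perm (Fin l)) (n : ℕ → ℤ) : List Bool :=
  if 0 ≤ n (l - 1) then List.replicate (n (l - 1)).toNat false ++ coreWord l σ n
  else (coreWord l σ n).drop (-(n (l - 1))).toNat

/-- `σ(1) = l` and `σ(l) = 1` (in 1-based notation). -/
def SigmaCond (l : ℕ) (σ : Equiv.Perm (Fin l)) : Prop :=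
  (∀ a : Fin l, (a : ℕ) = 0 → (σ a : ℕ) = l - 1) ∧
  (∀ a : Fin l, (a : ℕ) = l - 1 → (σ a : ℕ) = 0)

/-- The conditions on `n = (n_1,…,n_{l-1})`: `n_i ≥ 0` for `i ≤ l-2`,
`n_{l-1} ≥ 2 - σ(l-1)`, `n_i > 0` whenever `σ(i) < σ(i+1)`; the unused entries
are normalized to `0`. -/
def NCond (l : ℕ) (σ : Equiv.Perm (Fin l)) (n : ℕ → ℤ) : Prop :=
  (∀ i, 1 ≤ i → i ≤ l - 2 → 0 ≤ n i) ∧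
  (∀ a : Fin l, (a : ℕ) = l - 2 → (2 : ℤ) - (((σ a : ℕ) : ℤ) + 1) ≤ n (l - 1)) ∧
  (∀ i, 1 ≤ i → i ≤ l - 1 → ∀ a b : Fin l, (a : ℕ) = i - 1 → (b : ℕ) = i →
      (σ a : ℕ) < (σ b : ℕ) → 0 < n i) ∧
  (∀ i, i = 0 ∨ l - 1 < i → n i = 0)

end

def seqCons (i : ℕ) (y : ℕ → ℕ) : ℕ → ℕ
  | 0 => i
  | j + 1 => y j

section SeqCons

variable (i : ℕ) (y : ℕ → ℕ)

@[simp] lemma seqCons_zero : seqCons i y 0 = i := rfl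

@[simp] lemma seqCons_succ (j : ℕ) : seqCons i y (j + 1) = y j := rfl

lemma seqCons_head_tail (x : ℕ → ℕ) : seqCons (x 0) (fun j => x (j + 1)) = x := by
  funext j
  cases j <;> rfl

lemma sum_range_succ_seqCons (n : ℕ) :
    ∑ t ∈ range (n + 1), seqCons i y t = i + ∑ t ∈ range n, y t := by
  rw [sum_range_succ', add_comm]
  rfl

lemma sum_range_succ_mul_seqCons (n : ℕ) :
    ∑ t ∈ range (n + 1), t * seqCons i y t =
      ∑ t ∈ range n, t * y t + ∑ t ∈ range n, y t := by
  rw [sum_range_succ', ← sum_add_distrib]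
  simp [add_mul]

end SeqCons

section Configurations

variable {k l : ℕ}

lemma windowOK.apply_le (hl : 1 ≤ l) {x : ℕ → ℕ} (hx : windowOK k l x) (j : ℕ) : x j ≤ k :=
  (single_le_sum (f := fun t => x (j + t)) (fun _ _ => Nat.zero_le _) (mem_range.2 hl)).trans
    (hx j)

lemma windowOK_seqCons_iff (hl : 1 ≤ l) {i : ℕ} {y : ℕ → ℕ} :
    windowOK k l (seqCons i y) ↔ i + ∑ t ∈ range (l - 1), y t ≤ k ∧ windowOK k l y := by
  have hfirst : ∑ t ∈ range l, seqCons i y (0 + t) = i + ∑ t ∈ range (l - 1), y t := by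
    obtain ⟨m, rfl⟩ : ∃ m, l = m + 1 := ⟨l - 1, by omega⟩
    simpa using sum_range_succ_seqCons i y m
  have hshift (j : ℕ) :
      ∑ t ∈ range l, seqCons i y (j + 1 + t) = ∑ t ∈ range l, y (j + t) :=
    sum_congr rfl fun t _ => by rw [Nat.add_right_comm]; rfl
  constructor
  · intro h
    exact ⟨hfirst ▸ h 0, fun j => hshift j ▸ h (j + 1)⟩
  · rintro ⟨h0, hy⟩ (_ | j)
    · exact hfirst ▸ h0
    · exact (hshift j).symm ▸ hy j

/-- The window `x_0 + ⋯ + x_{l-1} ≤ k` of the configuration becomes the last entry `k - i`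
of the shifted boundary vector. -/
lemma windowOK_boundOK_seqCons_iff (hl : 2 ≤ l) {b : ℕ → ℕ} (hb : AdmB k l b) {i : ℕ}
    {y : ℕ → ℕ} :
    windowOK k l (seqCons i y) ∧ boundOK l b (seqCons i y) ↔
      i ≤ b 0 ∧ windowOK k l y ∧ boundOK l (shiftB k l b i) y := by
  have hlast : l - 2 + 1 = l - 1 := by omega
  rw [windowOK_seqCons_iff (by omega)]
  constructor
  · rintro ⟨⟨hfirst, hy⟩, hbd⟩
    refine ⟨by simpa using hbd 0 (by omega), hy, fun m hm => ?_⟩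
    unfold shiftB
    split_ifs with hm'
    · have := hbd (m + 1) (by omega)
      rw [sum_range_succ_seqCons] at this
      omega
    · rw [show m + 1 = l - 1 by omega]
      omega
  · rintro ⟨hi, hy, hbd⟩
    refine ⟨⟨?_, hy⟩, ?_⟩
    · have := hbd (l - 2) (by omega)
      rw [shiftB, if_neg (by omega), hlast] at this
      have := hb.2 0 (by omega)
      omega
    · rintro (_ | m) hm
      · simpa using hi
      · have := hbd m (by omega)
        rw [shiftB, if_pos (by omega)] at this
        have := hb.1 0 (m + 1) (Nat.zero_le _) hm
        rw [sum_range_succ_seqCons]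
        omega

/-- The set `C^{(N)}_{k,l;b}`. -/
def configs (k l N : ℕ) (b : ℕ → ℕ) : Set (ℕ → ℕ) :=
  {x | windowOK k l x ∧ boundOK l b x ∧ ∀ i, N ≤ i → x i = 0}

lemma configs_finite (hl : 1 ≤ l) (N : ℕ) (b : ℕ → ℕ) : (configs k l N b).Finite := by
  refine (Set.finite_range fun f : Fin N → Fin (k + 1) =>
    fun j => if h : j < N then (f ⟨j, h⟩ : ℕ) else 0).subset ?_
  rintro x ⟨hw, -, hz⟩
  refine ⟨fun j => ⟨x j, Nat.lt_succ_of_le (hw.apply_le hl j)⟩, funext fun j => ?_⟩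
  dsimp only
  split_ifs with hj
  · rfl
  · exact (hz j (by omega)).symm

lemma seqCons_mem_configs_iff (hl : 2 ≤ l) {N : ℕ} {b : ℕ → ℕ} (hb : AdmB k l b) {i : ℕ}
    {y : ℕ → ℕ} :
    seqCons i y ∈ configs k l (N + 1) b ↔ i ≤ b 0 ∧ y ∈ configs k l N (shiftB k l b i) := by
  have hlen : (∀ j, N + 1 ≤ j → seqCons i y j = 0) ↔ ∀ j, N ≤ j → y j = 0 :=
    ⟨fun h j hj => h (j + 1) (by omega), fun h j hj => by
      obtain ⟨j, rfl⟩ : ∃ m, j = m + 1 := ⟨j - 1, by omega⟩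
      exact h j (by omega)⟩
  simp only [configs, Set.mem_ofPred_eq, ← and_assoc, windowOK_boundOK_seqCons_iff hl hb, hlen]

end Configurations

section PowerSeries

@[simp] lemma idx2_apply_zero (a c : ℕ) : idx2 a c 0 = a := by
  simp [idx2]

@[simp] lemma idx2_apply_one (a c : ℕ) : idx2 a c 1 = c := by
  simp [idx2]

lemma eq_idx2_iff {e : Fin 2 →₀ ℕ} {a c : ℕ} : e = idx2 a c ↔ a = e 0 ∧ c = e 1 := by
  simp [Finsupp.ext_iff, Fin.forall_fin_two, eq_comm]

lemma coeff_monoPS (e : Fin 2 →₀ ℕ) (a c : ℕ) :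
    coeff e (monoPS (a, c)) = if a = e 0 ∧ c = e 1 then 1 else 0 := by
  rw [monoPS, Qv, Zv, X_pow_eq, X_pow_eq, monomial_mul_monomial, one_mul, coeff_monomial,
    ← idx2]
  simp only [eq_idx2_iff]

lemma coeff_Sop (e : Fin 2 →₀ ℕ) (f : PS) :
    coeff e (Sop f) = if e 1 ≤ e 0 then coeff (idx2 (e 0 - e 1) (e 1)) f else 0 :=
  rfl

lemma Sop_add (f g : PS) : Sop (f + g) = Sop f + Sop g := by
  ext e
  simp only [map_add, coeff_Sop]
  split_ifs <;> simp

lemma Sop_sum {ι : Type*} (s : Finset ι) (f : ι → PS) :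
    Sop (∑ i ∈ s, f i) = ∑ i ∈ s, Sop (f i) :=
  map_sum (AddMonoidHom.mk' Sop Sop_add) f s

lemma Sop_monoPS (a c : ℕ) : Sop (monoPS (a, c)) = monoPS (a + c, c) := by
  ext e
  rw [coeff_monoPS, coeff_Sop, coeff_monoPS, idx2_apply_zero, idx2_apply_one]
  split_ifs <;> first | rfl | omega

end PowerSeries

section Characters

variable {k l : ℕ}

lemma shiftB_admB (hl : 2 ≤ l) {b : ℕ → ℕ} (hb : AdmB k l b) (i : ℕ) :
    AdmB k l (shiftB k l b i) := by
  refine ⟨fun j j' hjj' hj' => ?_, fun j hj => ?_⟩ <;> unfold shiftB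
  · split_ifs with h h'
    · exact Nat.sub_le_sub_right (hb.1 (j + 1) (j' + 1) (by omega) (by omega)) i
    · exact Nat.sub_le_sub_right (hb.2 (j + 1) (by omega)) i
    · omega
    · rfl
  · split_ifs
    · exact (Nat.sub_le _ _).trans (hb.2 (j + 1) (by omega))
    · exact Nat.sub_le _ _

lemma sum_configs_succ {M : Type*} [AddCommMonoid M] (hl : 2 ≤ l) {N : ℕ} {b : ℕ → ℕ}
    (hb : AdmB k l b) (f : (ℕ → ℕ) → M) :
    ∑ x ∈ (configs_finite (k := k) (one_le_two.trans hl) (N + 1) b).toFinset, f x =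
      ∑ i ∈ range (b 0 + 1),
        ∑ y ∈ (configs_finite (k := k) (one_le_two.trans hl) N (shiftB k l b i)).toFinset,
          f (seqCons i y) := by
  have hmem {x : ℕ → ℕ} : x ∈ configs k l (N + 1) b ↔
      x 0 ≤ b 0 ∧ (fun j => x (j + 1)) ∈ configs k l N (shiftB k l b (x 0)) := by
    conv_lhs => rw [← seqCons_head_tail x]
    exact seqCons_mem_configs_iff hl hb
  rw [← sum_fiberwise_of_maps_to (g := fun x => x 0) (t := range (b 0 + 1))
    fun x hx => mem_range.2 (Nat.lt_succ_of_le (hmem.1 ((Set.Finite.mem_toFinset _).1 hx)).1)]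
  refine sum_congr rfl fun i hi => ?_
  have hhead {x : ℕ → ℕ} (hx : x 0 = i) : seqCons i (fun j => x (j + 1)) = x := by
    rw [← hx, seqCons_head_tail]
  refine sum_nbij' (fun x j => x (j + 1)) (seqCons i) (fun x hx => ?_) (fun y hy => ?_)
    (fun x hx => hhead (mem_filter.1 hx).2) (fun _ _ => rfl)
    (fun x hx => by rw [hhead (mem_filter.1 hx).2])
  · simp only [mem_filter, Set.Finite.mem_toFinset] at hx
    simpa [← hx.2] using (hmem.1 hx.1).2
  · simp only [mem_filter, Set.Finite.mem_toFinset] at hy ⊢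
    exact ⟨(seqCons_mem_configs_iff hl hb).2 ⟨by simpa using mem_range.1 hi, hy⟩, rfl⟩

lemma chiN_eq_sum {N : ℕ} {b : ℕ → ℕ} (hfin : (configs k l N b).Finite) :
    chiN k l N b = ∑ x ∈ hfin.toFinset, monoPS (∑ j ∈ range N, j * x j, ∑ j ∈ range N, x j) := by
  ext e
  simp only [map_sum, coeff_monoPS, sum_boole, ← Nat.card_eq_finsetCard]
  change ((Nat.card _ : ℕ) : ℂ) = _
  exact congrArg _ <| Nat.card_congr <| Equiv.subtypeEquivRight fun x => by
    simp [configs, and_assoc]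

lemma chiN_zero (b : ℕ → ℕ) : chiN k l 0 b = 1 := by
  have hzero : configs k l 0 b = {0} := by
    ext x
    simp only [configs, windowOK, boundOK, Set.mem_ofPred_eq, Set.mem_singleton_iff, funext_iff]
    exact ⟨fun h i => h.2.2 i i.zero_le, fun h => by simp [h]⟩
  rw [chiN_eq_sum (hzero ▸ Set.finite_singleton 0)]
  simp [hzero, monoPS]

lemma monoPS_seqCons (N i : ℕ) (y : ℕ → ℕ) :
    monoPS (∑ j ∈ range (N + 1), j * seqCons i y j, ∑ j ∈ range (N + 1), seqCons i y j) =
      Zv ^ i * Sop (monoPS (∑ j ∈ range N, j * y j, ∑ j ∈ range N, y j)) := by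
  rw [sum_range_succ_mul_seqCons, sum_range_succ_seqCons, Sop_monoPS, monoPS, monoPS, pow_add]
  ring

lemma chiN_succ (hl : 2 ≤ l) {N : ℕ} {b : ℕ → ℕ} (hb : AdmB k l b) :
    chiN k l (N + 1) b = ∑ i ∈ range (b 0 + 1), Zv ^ i * Sop (chiN k l N (shiftB k l b i)) := by
  simp only [chiN_eq_sum (configs_finite (one_le_two.trans hl) _ _), sum_configs_succ hl hb,
    monoPS_seqCons, Sop_sum, mul_sum]

end Characters

theorem stmt1_general (k l : ℕ) (hl : 2 ≤ l)
    (F : ℕ → (ℕ → ℕ) → PS) :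
    ((∀ b, AdmB k l b → F 0 b = 1) ∧
      (∀ N b, AdmB k l b →
        F (N + 1) b = ∑ i ∈ Finset.range (b 0 + 1), Zv ^ i * Sop (F N (shiftB k l b i)))) ↔
    (∀ b, AdmB k l b → ∀ N, F N b = chiN k l N b) := by
  constructor
  · rintro ⟨hzero, hsucc⟩ b hb N
    induction N generalizing b with
    | zero => rw [hzero b hb, chiN_zero]
    | succ N ih =>
      rw [hsucc N b hb, chiN_succ hl hb]
      exact sum_congr rfl fun i _ => by rw [ih _ (shiftB_admB hl hb i)]
  · intro h
    refine ⟨fun b hb => by rw [h b hb, chiN_zero], fun N b hb => ?_⟩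
    rw [h b hb, chiN_succ hl hb]
    exact sum_congr rfl fun i _ => by rw [h _ (shiftB_admB hl hb i)]

/-- The family of characters `χ^{(N)}_{k,l;b}(q,z)` is the unique solution of the
recursion `χ^{(N+1)}_{k,l;(b_0,…,b_{l-2})}(q,z) = Σ_{i=0}^{b_0} z^i χ^{(N)}_{k,l;(b_1-i,…,b_{l-2}-i,k-i)}(q,qz)`
with initial condition `χ^{(0)}_{k,l;b}(q,z) = 1` for all admissible boundary vectors `b`. -/
theorem stmt1 (k l : ℕ) (hk : 0 < k) (hl : 2 ≤ l)
    (F : ℕ → (ℕ → ℕ) → PS) :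
    ((∀ b, AdmB k l b → F 0 b = 1) ∧
      (∀ N b, AdmB k l b →
        F (N + 1) b = ∑ i ∈ Finset.range (b 0 + 1), Zv ^ i * Sop (F N (shiftB k l b i)))) ↔
    (∀ b, AdmB k l b → ∀ N, F N b = chiN k l N b) :=
  stmt1_general k l hl F
end

section
/- The maps M_a and M_b on Λ satisfy: M_a(ι_{i,j}) = ι_{i+1−δ_{ī,1}, j+1−δ_{j̄,1}} if (ī, j̄) ≠ (1, l), M_a(ι_{i,j}) = 0 if (ī, j̄) = (1, l), and M_b(ι_{i,j}) = ι_{i+1, j+1}, for all integers i, j. -/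
open Finset Filter MvPowerSeries

/-!
`M_a` and `M_b` are additive, and `ι_{i,j} = b_{ī-2} - b_{j̄-2} + δ(ī ≤ j̄)·k`, so it suffices to
know the images of the generators. Writing `p⁺` for the cyclic successor of `p ∈ {1,…,l}`, one has
`M_b(b_{p-2}) = b_{p⁺-2} - b_0 + δ_{p,l}·k` and `M_a(b_{p-2}) = b_{p'-2} + δ_{p,l}·k`, where `p' = 1`
for `p = 1` and `p' = p⁺` otherwise; both hold uniformly thanks to `b_{-1} = 0`. The `b`-parts of
the images are then already those of the claimed right-hand sides, and what remains is an identity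
between the coefficients of `k`, checked case by case.
-/

/-- `b_{p-2}`, with `b_{-1} = 0`. -/
def bgen (p : ℕ) : ℕ → ℤ := fun t => if 2 ≤ p ∧ t = p - 2 then 1 else 0

/-- The successor on the residues `{1, …, l}` modulo `l`. -/
def cycSucc (l p : ℕ) : ℕ := if p = l then 1 else p + 1

def iotaRes (l p q : ℕ) : ℕ → ℤ :=
  bgen p - bgen q + Pi.single (l - 1) (if p ≤ q then 1 else 0)

lemma iotaL_eq_iotaRes (l : ℕ) (i j : ℤ) : iotaL l i j = iotaRes l (ibar l i) (ibar l j) := by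
  funext t
  simp only [iotaL, iotaRes, bgen, Pi.add_apply, Pi.sub_apply, Pi.single_apply]
  split_ifs <;> omega

lemma one_le_ibar (l : ℕ) (i : ℤ) : 1 ≤ ibar l i := Nat.le_add_left 1 _

lemma ibar_le (l : ℕ) (hl : 1 ≤ l) (i : ℤ) : ibar l i ≤ l := by
  have := Int.emod_lt_of_pos (i - 1) (by omega : (0 : ℤ) < l)
  unfold ibar
  omega

lemma ibar_add_one (l : ℕ) (hl : 2 ≤ l) (i : ℤ) : ibar l (i + 1) = cycSucc l (ibar l i) := by
  have hl0 : (0 : ℤ) < l := by omega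
  have hr0 := Int.emod_nonneg (i - 1) hl0.ne'
  have hrl := Int.emod_lt_of_pos (i - 1) hl0
  have hmod : (i + 1 - 1) % l = ((i - 1) % l + 1) % l := by
    rw [Int.emod_add_emod, sub_add_cancel, add_sub_cancel_right]
  unfold ibar cycSucc
  rw [hmod]
  by_cases hlast : (i - 1) % l + 1 = l
  · rw [hlast, Int.emod_self, if_pos (by omega)]
    rfl
  · rw [Int.emod_eq_of_lt (by omega) (by omega), if_neg (by omega)]
    omega

lemma Ma_add (l : ℕ) (u v : ℕ → ℤ) : Ma l (u + v) = Ma l u + Ma l v := by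
  funext j
  simp only [Ma, Pi.add_apply]
  split_ifs <;> ring

lemma Ma_sub (l : ℕ) (u v : ℕ → ℤ) : Ma l (u - v) = Ma l u - Ma l v := by
  funext j
  simp only [Ma, Pi.sub_apply]
  split_ifs <;> ring

lemma Mb_add (l : ℕ) (u v : ℕ → ℤ) : Mb l (u + v) = Mb l u + Mb l v := by
  funext j
  simp only [Mb, Pi.add_apply, Finset.sum_add_distrib]
  split_ifs <;> ring

lemma Mb_sub (l : ℕ) (u v : ℕ → ℤ) : Mb l (u - v) = Mb l u - Mb l v := by
  funext j
  simp only [Mb, Pi.sub_apply, Finset.sum_sub_distrib]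
  split_ifs <;> ring

lemma Ma_single_last (l : ℕ) (hl : 2 ≤ l) (c : ℤ) :
    Ma l (Pi.single (l - 1) c) = Pi.single (l - 1) c := by
  funext j
  simp only [Ma, Pi.single_apply]
  split_ifs <;> omega

lemma Mb_single_last (l : ℕ) (hl : 2 ≤ l) (c : ℤ) :
    Mb l (Pi.single (l - 1) c) = Pi.single (l - 1) c := by
  funext j
  simp only [Mb, Pi.single_apply, Finset.sum_ite_eq', Finset.mem_range, lt_irrefl, if_false]
  split_ifs <;> omega

lemma Ma_bgen (l p : ℕ) (hl : 2 ≤ l) (hpl : p ≤ l) :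
    Ma l (bgen p) = bgen (if p = 1 then 1 else cycSucc l p) +
      Pi.single (l - 1) (if p = l then 1 else 0) := by
  funext j
  simp only [Ma, bgen, cycSucc, Pi.add_apply, Pi.single_apply]
  split_ifs <;> omega

lemma sum_bgen (l p : ℕ) (hpl : p ≤ l) :
    ∑ t ∈ Finset.range (l - 1), bgen p t = if 2 ≤ p then 1 else 0 := by
  simp only [bgen, ite_and]
  split_ifs with hp
  · rw [Finset.sum_ite_eq', if_pos (Finset.mem_range.mpr (by omega))]
  · simp

lemma Mb_bgen (l p : ℕ) (hl : 2 ≤ l) (hp : 1 ≤ p) (hpl : p ≤ l) :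
    Mb l (bgen p) = bgen (cycSucc l p) - bgen 2 +
      Pi.single (l - 1) (if p = l then 1 else 0) := by
  funext j
  simp only [Mb, sum_bgen l p hpl]
  simp only [bgen, cycSucc, Pi.add_apply, Pi.sub_apply, Pi.single_apply]
  split_ifs <;> omega

lemma Mb_iotaRes (l p q : ℕ) (hl : 2 ≤ l) (hp : 1 ≤ p) (hpl : p ≤ l) (hq : 1 ≤ q) (hql : q ≤ l) :
    Mb l (iotaRes l p q) = iotaRes l (cycSucc l p) (cycSucc l q) := by
  have hk : (if cycSucc l p ≤ cycSucc l q then 1 else 0 : ℤ) =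
      ((if p = l then 1 else 0) - (if q = l then 1 else 0)) + if p ≤ q then 1 else 0 := by
    unfold cycSucc
    split_ifs <;> omega
  rw [iotaRes, Mb_add, Mb_sub, Mb_bgen l p hl hp hpl, Mb_bgen l q hl hq hql,
    Mb_single_last l hl, iotaRes, hk, Pi.single_add, Pi.single_sub]
  abel

lemma Ma_iotaRes (l p q : ℕ) (hl : 2 ≤ l) (hpl : p ≤ l) (hql : q ≤ l) :
    Ma l (iotaRes l p q) =
      bgen (if p = 1 then 1 else cycSucc l p) - bgen (if q = 1 then 1 else cycSucc l q) +
        Pi.single (l - 1)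
          (((if p = l then 1 else 0) - (if q = l then 1 else 0)) + if p ≤ q then 1 else 0) := by
  rw [iotaRes, Ma_add, Ma_sub, Ma_bgen l p hl hpl, Ma_bgen l q hl hql,
    Ma_single_last l hl, Pi.single_add, Pi.single_sub]
  abel

lemma Ma_iotaRes_of_ne (l p q : ℕ) (hl : 2 ≤ l) (hp : 1 ≤ p) (hpl : p ≤ l) (hq : 1 ≤ q)
    (hql : q ≤ l) (hpq : ¬(p = 1 ∧ q = l)) :
    Ma l (iotaRes l p q) =
      iotaRes l (if p = 1 then 1 else cycSucc l p) (if q = 1 then 1 else cycSucc l q) := by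
  rw [Ma_iotaRes l p q hl hpl hql, iotaRes]
  congr 2
  unfold cycSucc
  split_ifs <;> omega

lemma Ma_iotaRes_one_last (l : ℕ) (hl : 2 ≤ l) : Ma l (iotaRes l 1 l) = 0 := by
  have hl1 : l ≠ 1 := by omega
  simp [Ma_iotaRes l 1 l hl (by omega) le_rfl, cycSucc, hl1, Ne.symm hl1,
    show 1 ≤ l by omega]

lemma ibar_add_one_sub (l : ℕ) (hl : 2 ≤ l) (i : ℤ) :
    ibar l (i + 1 - if ibar l i = 1 then 1 else 0) =
      if ibar l i = 1 then 1 else cycSucc l (ibar l i) := by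
  split_ifs with h
  · rwa [add_sub_cancel_right]
  · rw [sub_zero, ibar_add_one l hl]

/-- Lemma on the action of `M_a`, `M_b` on the vectors `ι_{i,j} ∈ Λ`:
`M_a(ι_{i,j}) = ι_{i+1-δ_{ī,1}, j+1-δ_{j̄,1}}` if `(ī,j̄) ≠ (1,l)`,
`M_a(ι_{i,j}) = 0` if `(ī,j̄) = (1,l)`, and `M_b(ι_{i,j}) = ι_{i+1,j+1}`. -/
theorem stmt9 (l : ℕ) (hl : 2 ≤ l) (i j : ℤ) :
    (¬(ibar l i = 1 ∧ ibar l j = l) →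
      Ma l (iotaL l i j) =
        iotaL l (i + 1 - if ibar l i = 1 then 1 else 0)
          (j + 1 - if ibar l j = 1 then 1 else 0)) ∧
    ((ibar l i = 1 ∧ ibar l j = l) → Ma l (iotaL l i j) = 0) ∧
    Mb l (iotaL l i j) = iotaL l (i + 1) (j + 1) := by
  have hi := ibar_le l (by omega) i
  have hj := ibar_le l (by omega) j
  simp only [iotaL_eq_iotaRes, ibar_add_one_sub l hl, ibar_add_one l hl]
  refine ⟨fun hij => ?_, fun ⟨hi1, hjl⟩ => ?_, ?_⟩
  · exact Ma_iotaRes_of_ne l _ _ hl (one_le_ibar l i) hi (one_le_ibar l j) hj hij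
  · rw [hi1, hjl]
    exact Ma_iotaRes_one_last l hl
  · exact Mb_iotaRes l _ _ hl (one_le_ibar l i) hi (one_le_ibar l j) hj
end
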